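/- arXiv:2404.03828 — 2 statements merged into one kernel-verified Lean document; each statement's English description precedes it below -/
import Mathlib

section
/- For every x ∈ ℝ^d, the Outlier-Efficient Hopfield energy satisfies H(T(x)) ≤ H(x); consequently, for any sequence defined by x_{t+1} = T(x_t), the energy values H(x_t) are monotonically non-increasing in t. -/
/-!
`lse₁` is convex with gradient `T x` at `x`, so Jensen's inequality for `exp` gives the
subgradient bound `lse₁ y ≥ lse₁ x + ⟪T x, y - x⟫`. Taking `y = T x` and adding the quadratic
term gives `H (T x) ≤ H x - ‖T x - x‖² / 2`.
-/

open Real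
open scoped BigOperators RealInnerProductSpace

/-- `Softmax₁`: for `z ∈ ℝ^M`, `[Softmax₁(z)]_ν = exp(z_ν)/(1 + ∑_μ exp(z_μ))`. -/
noncomputable def softmax1 {M : ℕ} (z : Fin M → ℝ) : Fin M → ℝ :=
  fun ν => Real.exp (z ν) / (1 + ∑ μ, Real.exp (z μ))

theorem sum_softmax_mul_sub_le_log_sum_exp_sub {ι : Type*} [Fintype ι] [Nonempty ι]
    (c e : ι → ℝ) :
    ∑ i, (exp (c i) / ∑ j, exp (c j)) * (e i - c i)
      ≤ log (∑ i, exp (e i)) - log (∑ i, exp (c i)) := by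
  set Zc := ∑ j, exp (c j)
  set Ze := ∑ j, exp (e j)
  have hZc : 0 < Zc := Finset.sum_pos (fun j _ => exp_pos (c j)) Finset.univ_nonempty
  have hZe : 0 < Ze := Finset.sum_pos (fun j _ => exp_pos (e j)) Finset.univ_nonempty
  have hweights : ∑ i, exp (c i) / Zc = 1 := by
    rw [← Finset.sum_div, div_self hZc.ne']
  have hjensen := convexOn_exp.map_sum_le (t := Finset.univ) (p := fun i => e i - c i)
    (fun i _ => (div_pos (exp_pos (c i)) hZc).le) hweights (fun i _ => Set.mem_univ _)
  have hmean : ∑ i, (exp (c i) / Zc) • exp (e i - c i) = Ze / Zc := by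
    rw [eq_div_iff hZc.ne', Finset.sum_mul]
    refine Finset.sum_congr rfl fun i _ => ?_
    rw [smul_eq_mul, exp_sub]
    field_simp
  rw [hmean, ← le_log_iff_exp_le (div_pos hZe hZc), log_div hZe.ne' hZc.ne'] at hjensen
  simpa only [smul_eq_mul] using hjensen

theorem sum_softmax1_mul_sub_le {M : ℕ} (c e : Fin M → ℝ) :
    ∑ μ, softmax1 c μ * (e μ - c μ)
      ≤ log (1 + ∑ μ, exp (e μ)) - log (1 + ∑ μ, exp (c μ)) := by
  -- the `1` in the normaliser is an extra logit `0`
  simpa [Fin.sum_univ_succ, softmax1] using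
    sum_softmax_mul_sub_le_log_sum_exp_sub (Fin.cons 0 c : Fin (M + 1) → ℝ) (Fin.cons 0 e)

section Hopfield

variable {E : Type*} [NormedAddCommGroup E] [InnerProductSpace ℝ E] {M : ℕ}
  (β : ℝ) (ξ : Fin M → E)

noncomputable def lse1 (x : E) : ℝ :=
  β⁻¹ * log (1 + ∑ μ, exp (β * ⟪ξ μ, x⟫))

noncomputable def hopfieldEnergy (x : E) : ℝ :=
  -lse1 β ξ x + (1 / 2) * ⟪x, x⟫

noncomputable def hopfieldRetrieval (x : E) : E :=
  ∑ μ, softmax1 (fun ν => β * ⟪ξ ν, x⟫) μ • ξ μ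

variable {β}

theorem inner_hopfieldRetrieval_sub_le_lse1_sub (hβ : 0 < β) (x y : E) :
    ⟪hopfieldRetrieval β ξ x, y - x⟫ ≤ lse1 β ξ y - lse1 β ξ x := by
  have hsubgradient := sum_softmax1_mul_sub_le (fun ν => β * ⟪ξ ν, x⟫) (fun ν => β * ⟪ξ ν, y⟫)
  have hinner : ⟪hopfieldRetrieval β ξ x, y - x⟫
      = β⁻¹ * ∑ μ, softmax1 (fun ν => β * ⟪ξ ν, x⟫) μ * (β * ⟪ξ μ, y⟫ - β * ⟪ξ μ, x⟫) := by
    simp only [hopfieldRetrieval, sum_inner, real_inner_smul_left, inner_sub_right,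
      ← Finset.sum_sub_distrib, Finset.mul_sum]
    refine Finset.sum_congr rfl fun μ _ => ?_
    field_simp
  rw [hinner, lse1, lse1, ← mul_sub]
  exact mul_le_mul_of_nonneg_left hsubgradient (inv_nonneg.mpr hβ.le)

theorem hopfieldEnergy_hopfieldRetrieval_le (hβ : 0 < β) (x : E) :
    hopfieldEnergy β ξ (hopfieldRetrieval β ξ x) ≤ hopfieldEnergy β ξ x := by
  have hsubgradient := inner_hopfieldRetrieval_sub_le_lse1_sub ξ hβ x (hopfieldRetrieval β ξ x)
  set y := hopfieldRetrieval β ξ x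
  have hdist : 0 ≤ ⟪y - x, y - x⟫ := real_inner_self_nonneg
  rw [inner_sub_right] at hsubgradient
  rw [inner_sub_sub_self, real_inner_comm y x] at hdist
  unfold hopfieldEnergy
  linarith

end Hopfield

/-- For every `x ∈ ℝ^d`, the Outlier-Efficient Hopfield energy
`H(x) = −lse₁(x) + (1/2)⟨x,x⟩` satisfies `H(T(x)) ≤ H(x)` for the retrieval dynamics
`T(x) = ∑_μ [Softmax₁(β Ξᵀ x)]_μ • ξ_μ`; consequently, for any sequence defined by
`x_{t+1} = T(x_t)`, the energy values `H(x_t)` are monotonically non-increasing in `t`. -/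
theorem stmt2 (d M : ℕ) (β : ℝ) (hβ : 0 < β)
    (ξ : Fin M → EuclideanSpace ℝ (Fin d))
    (H : EuclideanSpace ℝ (Fin d) → ℝ)
    (hH : ∀ x, H x = -(β⁻¹ * Real.log (1 + ∑ μ, Real.exp (β * ⟪ξ μ, x⟫)))
      + (1/2) * ⟪x, x⟫)
    (T : EuclideanSpace ℝ (Fin d) → EuclideanSpace ℝ (Fin d))
    (hT : ∀ x, T x = ∑ μ, softmax1 (fun ν => β * ⟪ξ ν, x⟫) μ • ξ μ) :
    (∀ x, H (T x) ≤ H x) ∧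
    ∀ xs : ℕ → EuclideanSpace ℝ (Fin d), (∀ t, xs (t + 1) = T (xs t)) →
      Antitone fun t => H (xs t) := by
  obtain rfl : H = hopfieldEnergy β ξ := funext hH
  obtain rfl : T = hopfieldRetrieval β ξ := funext hT
  have hdescent := hopfieldEnergy_hopfieldRetrieval_le ξ hβ
  refine ⟨hdescent, fun xs hxs => antitone_nat_of_succ_le fun t => ?_⟩
  rw [hxs t]
  exact hdescent (xs t)
end

section
/- Fix β > 0, a query x ∈ ℝ^d, memory patterns ξ_1, …, ξ_M ∈ ℝ^d arranged as columns of Ξ, and an index μ ∈ [M]. Let T_original(x) = Ξ · Softmax(β Ξᵀ x) and T_OutEff(x) = Ξ · Softmax₁(β Ξᵀ x), and let γ := ∑_{ν=1}^M [Softmax₁(β Ξᵀ x)]_ν. Assume that T_original(x) and ξ_μ are unit vectors (‖T_original(x)‖ = ‖ξ_μ‖ = 1). If (γ + 1)/2 ≥ ⟨T_original(x), ξ_μ⟩, then ‖T_OutEff(x) − ξ_μ‖ ≤ ‖T_original(x) − ξ_μ‖. -/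
open Real
open scoped BigOperators RealInnerProductSpace

/-- `Softmax`: for `z ∈ ℝ^M`, `[Softmax(z)]_ν = exp(z_ν)/∑_μ exp(z_μ)`. -/
noncomputable def softmax {M : ℕ} (z : Fin M → ℝ) : Fin M → ℝ :=
  fun ν => Real.exp (z ν) / (∑ μ, Real.exp (z μ))

/-!
Both softmaxes normalise the same weights `exp z_ν`, so `Softmax₁ = γ • Softmax` with
`γ = ∑ exp / (1 + ∑ exp) ≤ 1`, hence `T_OutEff(x) = γ • T_original(x)`. For a unit vector `t`,
expanding the squares gives `‖γ t - u‖² - ‖t - u‖² = (γ - 1)(γ + 1 - 2⟪t, u⟫)`, and the hypothesis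
on `⟪t, u⟫` makes the second factor nonnegative.
-/

section Softmax

variable {M : ℕ}

theorem sum_softmax1 (z : Fin M → ℝ) :
    ∑ ν, softmax1 z ν = (∑ μ, exp (z μ)) / (1 + ∑ μ, exp (z μ)) := by
  simp only [softmax1, ← Finset.sum_div]

theorem sum_softmax1_le_one (z : Fin M → ℝ) : ∑ ν, softmax1 z ν ≤ 1 := by
  have hpos : 0 ≤ ∑ μ, exp (z μ) := Finset.sum_nonneg fun μ _ => (exp_pos (z μ)).le
  rw [sum_softmax1, div_le_one (by linarith)]
  linarith

theorem softmax1_apply_eq_mul_softmax (z : Fin M → ℝ) (ν : Fin M) :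
    softmax1 z ν = (∑ μ, softmax1 z μ) * softmax z ν := by
  have hpos : 0 < ∑ μ, exp (z μ) := Finset.sum_pos (fun μ _ => exp_pos (z μ)) ⟨ν, by simp⟩
  rw [sum_softmax1, softmax1, softmax]
  field_simp

theorem sum_softmax1_smul {E : Type*} [AddCommGroup E] [Module ℝ E]
    (z : Fin M → ℝ) (v : Fin M → E) :
    ∑ ν, softmax1 z ν • v ν = (∑ μ, softmax1 z μ) • ∑ ν, softmax z ν • v ν := by
  simp only [Finset.smul_sum, smul_smul, ← softmax1_apply_eq_mul_softmax]

end Softmax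

theorem norm_smul_sub_le_norm_sub_of_inner_le {E : Type*} [NormedAddCommGroup E]
    [InnerProductSpace ℝ E] {t u : E} {γ : ℝ} (ht : ‖t‖ = 1) (hγ : γ ≤ 1)
    (hinner : ⟪t, u⟫ ≤ (γ + 1) / 2) :
    ‖γ • t - u‖ ≤ ‖t - u‖ := by
  have hsq : ‖γ • t - u‖ ^ 2 - ‖t - u‖ ^ 2 = (γ - 1) * (γ + 1 - 2 * ⟪t, u⟫) := by
    rw [norm_sub_sq_real, norm_sub_sq_real, norm_smul, real_inner_smul_left, mul_pow,
      Real.norm_eq_abs, sq_abs, ht]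
    ring
  have hdiff : (γ - 1) * (γ + 1 - 2 * ⟪t, u⟫) ≤ 0 :=
    mul_nonpos_of_nonpos_of_nonneg (by linarith) (by linarith)
  rw [← pow_le_pow_iff_left₀ (norm_nonneg _) (norm_nonneg _) two_ne_zero]
  linarith

theorem stmt11_general (d M : ℕ) (β : ℝ)
    (x : EuclideanSpace ℝ (Fin d))
    (ξ : Fin M → EuclideanSpace ℝ (Fin d)) (μ : Fin M)
    (Torig TOut : EuclideanSpace ℝ (Fin d)) (γ : ℝ)
    (hTorig : Torig = ∑ ν, softmax (fun ρ => β * ⟪ξ ρ, x⟫) ν • ξ ν)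
    (hTOut : TOut = ∑ ν, softmax1 (fun ρ => β * ⟪ξ ρ, x⟫) ν • ξ ν)
    (hγ : γ = ∑ ν, softmax1 (fun ρ => β * ⟪ξ ρ, x⟫) ν)
    (hTorig_unit : ‖Torig‖ = 1)
    (hcos : (γ + 1) / 2 ≥ ⟪Torig, ξ μ⟫) :
    ‖TOut - ξ μ‖ ≤ ‖Torig - ξ μ‖ := by
  have hTOut_eq : TOut = γ • Torig := by rw [hTOut, hTorig, hγ, sum_softmax1_smul]
  rw [hTOut_eq]
  exact norm_smul_sub_le_norm_sub_of_inner_le hTorig_unit (hγ ▸ sum_softmax1_le_one _) hcos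

/-- Let `T_original(x) = Ξ·Softmax(β Ξᵀ x)` and `T_OutEff(x) = Ξ·Softmax₁(β Ξᵀ x)`,
`γ = ∑_ν [Softmax₁(β Ξᵀ x)]_ν`. If `T_original(x)` and `ξ_μ` are unit vectors and
`(γ + 1)/2 ≥ ⟨T_original(x), ξ_μ⟩`, then `‖T_OutEff(x) − ξ_μ‖ ≤ ‖T_original(x) − ξ_μ‖`. -/
theorem stmt11 (d M : ℕ) (β : ℝ) (hβ : 0 < β)
    (x : EuclideanSpace ℝ (Fin d))
    (ξ : Fin M → EuclideanSpace ℝ (Fin d)) (μ : Fin M)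
    (Torig TOut : EuclideanSpace ℝ (Fin d)) (γ : ℝ)
    (hTorig : Torig = ∑ ν, softmax (fun ρ => β * ⟪ξ ρ, x⟫) ν • ξ ν)
    (hTOut : TOut = ∑ ν, softmax1 (fun ρ => β * ⟪ξ ρ, x⟫) ν • ξ ν)
    (hγ : γ = ∑ ν, softmax1 (fun ρ => β * ⟪ξ ρ, x⟫) ν)
    (hTorig_unit : ‖Torig‖ = 1) (hξμ_unit : ‖ξ μ‖ = 1)
    (hcos : (γ + 1) / 2 ≥ ⟪Torig, ξ μ⟫) :
    ‖TOut - ξ μ‖ ≤ ‖Torig - ξ μ‖ :=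
  stmt11_general d M β x ξ μ Torig TOut γ hTorig hTOut hγ hTorig_unit hcos
end
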